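/- Let Ω ⊂ ℝⁿ be a measurable set, D > 0, t > 0, ε > 0, and define u(x,t) = ∫_Ω (4πDt)^{-n/2} exp(−‖x−y‖²/(4Dt)) dy. If x ∈ Ω satisfies infDist(x, ℝⁿ ∖ Ω) ≥ ε, then 0 ≤ 1 − u(x,t) ≤ ∫_{{v ∈ ℝⁿ : ‖v‖ ≥ ε/(2√(Dt))}} π^{-n/2} e^{−‖v‖²} dv (a Gaussian-tail version of the principle of "not feeling the boundary": points at distance ≥ ε from the complement stay hot up to a Gaussian tail error). -/

import Mathlib

/-!
Writing `c = 2√(Dt)`, the heat kernel centred at `x` is the standard Gaussian density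
`g(v) = π^{-n/2} e^{-‖v‖²}` rescaled by `c` and translated to `x`: `K(y) = c⁻ⁿ g((y - x)/c)`.
Hence `K` is a probability density, so `1 - u(x,t)` is the mass `∫_{Ωᶜ} K ≥ 0`; since `Ωᶜ` lies
outside the ball of radius `ε` around `x`, this mass is at most the mass of `K` outside that
ball, which after the change of variables `v = (y - x)/c` is the Gaussian tail over `‖v‖ ≥ ε/c`.
-/

open MeasureTheory Set Real Module

section Rescaling

variable {E F : Type*} [NormedAddCommGroup E] [NormedSpace ℝ E] [MeasurableSpace E]
  [BorelSpace E] [FiniteDimensional ℝ E] (μ : Measure E) [μ.IsAddHaarMeasure]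
  [NormedAddCommGroup F] [NormedSpace ℝ F]

theorem integral_comp_inv_smul_sub (f : E → F) {c : ℝ} (hc : 0 ≤ c) (x : E) :
    ∫ y, f (c⁻¹ • (y - x)) ∂μ = c ^ finrank ℝ E • ∫ v, f v ∂μ := by
  rw [integral_sub_right_eq_self (fun y ↦ f (c⁻¹ • y)) x,
    Measure.integral_comp_inv_smul_of_nonneg μ f hc]

theorem setIntegral_comp_inv_smul_sub (f : E → F) {c : ℝ} (hc : 0 ≤ c) (x : E) {T : Set E}
    (hT : MeasurableSet T) :
    ∫ y in (fun y ↦ c⁻¹ • (y - x)) ⁻¹' T, f (c⁻¹ • (y - x)) ∂μ =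
      c ^ finrank ℝ E • ∫ v in T, f v ∂μ := by
  have hpre : MeasurableSet ((fun y ↦ c⁻¹ • (y - x)) ⁻¹' T) := hT.preimage (by fun_prop)
  rw [← integral_indicator hpre, ← integral_indicator hT,
    ← integral_comp_inv_smul_sub μ _ hc x]
  exact integral_congr_ae (.of_forall fun y ↦ indicator_comp_right (fun y ↦ c⁻¹ • (y - x)))

end Rescaling

section ProbabilityDensity

variable {Ω : Type*} [MeasurableSpace Ω] {μ : Measure Ω} {K : Ω → ℝ} {A S : Set Ω}

theorem one_sub_setIntegral_mem_Icc_of_compl_subset (hK : 0 ≤ K) (hKi : Integrable K μ)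
    (hK1 : ∫ y, K y ∂μ = 1) (hA : MeasurableSet A) (hS : Aᶜ ⊆ S) :
    1 - ∫ y in A, K y ∂μ ∈ Icc 0 (∫ y in S, K y ∂μ) := by
  have hcompl : 1 - ∫ y in A, K y ∂μ = ∫ y in Aᶜ, K y ∂μ := by
    rw [← hK1, ← integral_add_compl hA hKi, add_sub_cancel_left]
  rw [hcompl]
  exact ⟨setIntegral_nonneg hA.compl fun y _ ↦ hK y,
    setIntegral_mono_set hKi.integrableOn (.of_forall hK) hS.eventuallyLE⟩

end ProbabilityDensity

section HeatKernel

variable {V : Type*} [NormedAddCommGroup V] [InnerProductSpace ℝ V]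

noncomputable def gaussianDensity (v : V) : ℝ := π ^ (-(finrank ℝ V : ℝ) / 2) * exp (-‖v‖ ^ 2)

noncomputable def heatKernel (D t : ℝ) (x y : V) : ℝ :=
  (4 * π * D * t) ^ (-(finrank ℝ V : ℝ) / 2) * exp (-‖x - y‖ ^ 2 / (4 * D * t))

theorem gaussianDensity_nonneg (v : V) : 0 ≤ gaussianDensity v := by
  unfold gaussianDensity
  positivity

variable {D t : ℝ}

theorem heatKernel_eq_rescaled_gaussianDensity (hD : 0 < D) (ht : 0 < t) (x y : V) :
    heatKernel D t x y =
      ((2 * √(D * t)) ^ finrank ℝ V)⁻¹ * gaussianDensity ((2 * √(D * t))⁻¹ • (y - x)) := by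
  set c := 2 * √(D * t)
  have hc : 0 < c := by positivity
  have hc2 : c ^ 2 = 4 * D * t := by
    rw [mul_pow, sq_sqrt (by positivity)]
    ring
  have hcoef : (4 * π * D * t) ^ (-(finrank ℝ V : ℝ) / 2) =
      π ^ (-(finrank ℝ V : ℝ) / 2) * (c ^ finrank ℝ V)⁻¹ := by
    rw [show 4 * π * D * t = π * c ^ 2 by rw [hc2]; ring, mul_rpow pi_pos.le (by positivity),
      ← rpow_natCast c 2, ← rpow_mul hc.le, ← rpow_natCast, ← rpow_neg hc.le]
    congr 2
    push_cast
    ring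
  have hnorm : ‖c⁻¹ • (y - x)‖ ^ 2 = ‖x - y‖ ^ 2 / (4 * D * t) := by
    rw [norm_smul, norm_inv, norm_of_nonneg hc.le, mul_pow, ← hc2, norm_sub_rev]
    field_simp
  rw [heatKernel, gaussianDensity, hcoef, hnorm, ← neg_div]
  ring

theorem heatKernel_nonneg (hD : 0 < D) (ht : 0 < t) (x : V) : 0 ≤ heatKernel D t x := by
  intro y
  rw [heatKernel_eq_rescaled_gaussianDensity hD ht]
  exact mul_nonneg (by positivity) (gaussianDensity_nonneg _)

variable [FiniteDimensional ℝ V] [MeasurableSpace V] [BorelSpace V]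

theorem integral_gaussianDensity : ∫ v : V, gaussianDensity v = 1 := by
  have h := GaussianFourier.integral_rexp_neg_mul_sq_norm (V := V) one_pos
  simp only [neg_one_mul, div_one] at h
  simp only [gaussianDensity]
  rw [integral_const_mul, h, ← rpow_add pi_pos, neg_div, neg_add_cancel, rpow_zero]

theorem integrable_gaussianDensity : Integrable (gaussianDensity (V := V)) :=
  Integrable.of_integral_ne_zero (by rw [integral_gaussianDensity]; exact one_ne_zero)

theorem integrable_heatKernel (hD : 0 < D) (ht : 0 < t) (x : V) :
    Integrable (heatKernel D t x) := by
  have hc : 2 * √(D * t) ≠ 0 := by positivity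
  simp_rw [funext (heatKernel_eq_rescaled_gaussianDensity hD ht x)]
  exact ((integrable_gaussianDensity.comp_smul (inv_ne_zero hc)).comp_sub_right x).const_mul _

theorem integral_heatKernel (hD : 0 < D) (ht : 0 < t) (x : V) :
    ∫ y, heatKernel D t x y = 1 := by
  have hc : 0 < 2 * √(D * t) := by positivity
  simp_rw [heatKernel_eq_rescaled_gaussianDensity hD ht, integral_const_mul,
    integral_comp_inv_smul_sub volume gaussianDensity hc.le, integral_gaussianDensity,
    smul_eq_mul, mul_one]
  exact inv_mul_cancel₀ (pow_pos hc _).ne'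

theorem setIntegral_heatKernel_le_norm_sub (hD : 0 < D) (ht : 0 < t) (x : V) (ε : ℝ) :
    ∫ y in {y | ε ≤ ‖x - y‖}, heatKernel D t x y =
      ∫ v in {v : V | ε / (2 * √(D * t)) ≤ ‖v‖}, gaussianDensity v := by
  simp_rw [heatKernel_eq_rescaled_gaussianDensity hD ht]
  set c := 2 * √(D * t)
  have hc : 0 < c := by positivity
  have hpre : {y | ε ≤ ‖x - y‖} = (fun y ↦ c⁻¹ • (y - x)) ⁻¹' {v | ε / c ≤ ‖v‖} := by
    ext y
    simp only [mem_ofPred_eq, preimage_ofPred_eq, norm_smul, norm_inv, norm_of_nonneg hc.le,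
      norm_sub_rev y x, div_le_iff₀ hc, inv_mul_eq_div, div_mul_cancel₀ _ hc.ne']
  have hT : MeasurableSet {v : V | ε / c ≤ ‖v‖} :=
    measurableSet_le measurable_const measurable_norm
  rw [hpre, integral_const_mul, setIntegral_comp_inv_smul_sub volume gaussianDensity hc.le x hT,
    smul_eq_mul]
  exact inv_mul_cancel_left₀ (pow_pos hc _).ne' _

end HeatKernel

theorem not_feeling_the_boundary_general
    {n : ℕ} (Ω : Set (EuclideanSpace ℝ (Fin n))) (hΩm : MeasurableSet Ω)
    (D t ε : ℝ) (hD : 0 < D) (ht : 0 < t)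
    (x : EuclideanSpace ℝ (Fin n))
    (hdist : ε ≤ Metric.infDist x Ωᶜ) :
    0 ≤ 1 - (∫ y in Ω,
        (4 * Real.pi * D * t) ^ (-(n : ℝ) / 2) * Real.exp (-‖x - y‖ ^ 2 / (4 * D * t))) ∧
    1 - (∫ y in Ω,
        (4 * Real.pi * D * t) ^ (-(n : ℝ) / 2) * Real.exp (-‖x - y‖ ^ 2 / (4 * D * t))) ≤
      ∫ v in {v : EuclideanSpace ℝ (Fin n) | ε / (2 * Real.sqrt (D * t)) ≤ ‖v‖},
        Real.pi ^ (-(n : ℝ) / 2) * Real.exp (-‖v‖ ^ 2) := by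
  have hfar : Ωᶜ ⊆ {y | ε ≤ ‖x - y‖} := fun y hy ↦
    (hdist.trans (Metric.infDist_le_dist_of_mem hy)).trans_eq (dist_eq_norm x y)
  have key := one_sub_setIntegral_mem_Icc_of_compl_subset (heatKernel_nonneg hD ht x)
    (integrable_heatKernel hD ht x) (integral_heatKernel hD ht x) hΩm hfar
  rw [setIntegral_heatKernel_le_norm_sub hD ht x ε] at key
  simp only [heatKernel, gaussianDensity, finrank_euclideanSpace_fin] at key
  exact key

/-- Gaussian-tail version of the principle of "not feeling the boundary": if `x ∈ Ω` is at
distance at least `ε` from the complement of `Ω`, then `0 ≤ 1 − u(x,t)` and `1 − u(x,t)` is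
bounded by the Gaussian tail integral over `{‖v‖ ≥ ε/(2√(Dt))}`. -/
theorem not_feeling_the_boundary
    {n : ℕ} (Ω : Set (EuclideanSpace ℝ (Fin n))) (hΩm : MeasurableSet Ω)
    (D t ε : ℝ) (hD : 0 < D) (ht : 0 < t) (hε : 0 < ε)
    (x : EuclideanSpace ℝ (Fin n)) (hx : x ∈ Ω)
    (hdist : ε ≤ Metric.infDist x Ωᶜ) :
    0 ≤ 1 - (∫ y in Ω,
        (4 * Real.pi * D * t) ^ (-(n : ℝ) / 2) * Real.exp (-‖x - y‖ ^ 2 / (4 * D * t))) ∧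
    1 - (∫ y in Ω,
        (4 * Real.pi * D * t) ^ (-(n : ℝ) / 2) * Real.exp (-‖x - y‖ ^ 2 / (4 * D * t))) ≤
      ∫ v in {v : EuclideanSpace ℝ (Fin n) | ε / (2 * Real.sqrt (D * t)) ≤ ‖v‖},
        Real.pi ^ (-(n : ℝ) / 2) * Real.exp (-‖v‖ ^ 2) :=
  not_feeling_the_boundary_general Ω hΩm D t ε hD ht x hdist
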